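/- The function f(k_1,...,k_d) = -∑_i k_i·log k_i + ∑_i (k_i+α_i)·log(k_i+α_i) - (k+α)·log(k+α) + k·log k + C (where α = ∑_i α_i and C = -∑_i α_i·log α_i + α·log α collects constants), restricted to the simplex {k_i > 0, ∑_i k_i = k}, attains its unique maximum at k_i* = (k/α)·α_i for each i. -/

import Mathlib

open Real Finset

/-!
By `mul_binEntropy_div_add`, with `s i = k i + α i` and `H` the binary entropy,
`f kv = ∑ i, s i * H (k i / s i) - (k + α) * H (k / (k + α))`.
As `∑ i, s i = k + α` and `∑ i, k i = k`, this is the Jensen gap of the strictly concave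
function `H` for the weights `s i / (k + α)`. Hence `f kv ≤ 0`, with equality exactly when
every `k i / s i` equals `k / (k + α)`, i.e. when `k i = (k / α) * α i`; and `f` vanishes there.
-/

section Perspective

variable {ι : Type*} {t : Finset ι} {D : Set ℝ} {g : ℝ → ℝ} {s p : ι → ℝ}

lemma sum_div_sum_eq_one (hs : ∀ i ∈ t, 0 < s i) (ht : t.Nonempty) :
    ∑ i ∈ t, s i / ∑ j ∈ t, s j = 1 := by
  rw [← sum_div, div_self (sum_pos hs ht).ne']

lemma sum_div_sum_smul_div (hs : ∀ i ∈ t, 0 < s i) :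
    ∑ i ∈ t, (s i / ∑ j ∈ t, s j) • (p i / s i) = (∑ i ∈ t, p i) / ∑ i ∈ t, s i := by
  rw [sum_div]
  refine sum_congr rfl fun i hi => ?_
  rw [smul_eq_mul, div_mul_div_comm, mul_comm (s i), mul_div_mul_right _ _ (hs i hi).ne']

theorem ConcaveOn.sum_mul_map_div_le (hg : ConcaveOn ℝ D g) (hs : ∀ i ∈ t, 0 < s i)
    (hD : ∀ i ∈ t, p i / s i ∈ D) :
    ∑ i ∈ t, s i * g (p i / s i) ≤ (∑ i ∈ t, s i) * g ((∑ i ∈ t, p i) / ∑ i ∈ t, s i) := by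
  rcases t.eq_empty_or_nonempty with rfl | ht
  · simp
  have hS := sum_pos hs ht
  have jensen := hg.le_map_sum (fun i hi => (div_pos (hs i hi) hS).le) (sum_div_sum_eq_one hs ht) hD
  rw [sum_div_sum_smul_div hs] at jensen
  simp only [smul_eq_mul, div_mul_eq_mul_div, ← sum_div] at jensen
  rwa [div_le_iff₀' hS] at jensen

theorem StrictConcaveOn.div_eq_of_sum_mul_map_div_eq (hg : StrictConcaveOn ℝ D g)
    (hs : ∀ i ∈ t, 0 < s i) (hD : ∀ i ∈ t, p i / s i ∈ D)
    (heq : ∑ i ∈ t, s i * g (p i / s i) = (∑ i ∈ t, s i) * g ((∑ i ∈ t, p i) / ∑ i ∈ t, s i)) :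
    ∀ i ∈ t, p i / s i = (∑ i ∈ t, p i) / ∑ i ∈ t, s i := by
  rcases t.eq_empty_or_nonempty with rfl | ht
  · simp
  have hS := sum_pos hs ht
  rw [← sum_div_sum_smul_div hs, ← hg.map_sum_eq_iff (fun i hi => div_pos (hs i hi) hS)
    (sum_div_sum_eq_one hs ht) hD, sum_div_sum_smul_div hs]
  simp only [smul_eq_mul, div_mul_eq_mul_div, ← sum_div]
  rw [heq, mul_div_cancel_left₀ _ hS.ne']

end Perspective

lemma mul_binEntropy_div_add {x y : ℝ} (hx : 0 < x) (hy : 0 < y) :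
    (x + y) * binEntropy (x / (x + y)) = (x + y) * log (x + y) - x * log x - y * log y := by
  have hxy : 0 < x + y := by positivity
  have hcompl : 1 - x / (x + y) = y / (x + y) := by field_simp; ring
  rw [binEntropy, hcompl, inv_div, inv_div, log_div hxy.ne' hx.ne', log_div hxy.ne' hy.ne']
  field_simp
  ring

lemma div_add_eq_div_add_iff {x y a b : ℝ} (hx : 0 < x) (hy : 0 < y) (ha : 0 < a) (hb : 0 < b) :
    x / (x + y) = a / (a + b) ↔ x = a / b * y := by
  rw [div_eq_div_iff (by positivity) (by positivity), div_mul_eq_mul_div, eq_div_iff hb.ne']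
  constructor <;> intro h <;> linarith

/-- The Stirling approximation `f` of the Dirichlet–Multinomial log predictive
posterior attains its unique maximum on the simplex at `k_i* = (k/α) * α_i`. -/
theorem dm_stirling_mode (d : ℕ) (k : ℝ) (α : Fin d → ℝ)
    (hk : 0 < k) (hα : ∀ i, 0 < α i) :
    let A : ℝ := ∑ i, α i
    let C : ℝ := -(∑ i, α i * Real.log (α i)) + A * Real.log A
    let f : (Fin d → ℝ) → ℝ := fun kv =>
      -(∑ i, kv i * Real.log (kv i)) + (∑ i, (kv i + α i) * Real.log (kv i + α i))
        - (k + A) * Real.log (k + A) + k * Real.log k + C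
    let m : Fin d → ℝ := fun i => (k / A) * α i
    ∀ kv : Fin d → ℝ, (∀ i, 0 < kv i) → (∑ i, kv i = k) →
      f kv ≤ f m ∧ (f kv = f m → kv = m) := by
  intro A C f m kv hkv hsum
  have : Nonempty (Fin d) := by
    by_contra h
    simp only [not_nonempty_iff.mp h, univ_eq_empty, sum_empty] at hsum
    linarith
  have hA : 0 < A := sum_pos (fun i _ => hα i) univ_nonempty
  have hm : ∀ i, 0 < m i := fun i => mul_pos (div_pos hk hA) (hα i)
  have hf : ∀ v : Fin d → ℝ, (∀ i, 0 < v i) → f v =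
      ∑ i, (v i + α i) * binEntropy (v i / (v i + α i)) - (k + A) * binEntropy (k / (k + A)) := by
    intro v hv
    simp only [f, C, mul_binEntropy_div_add hk hA, mul_binEntropy_div_add (hv _) (hα _),
      sum_sub_distrib]
    ring
  have hfm : f m = 0 := by
    have hratio (i) : m i / (m i + α i) = k / (k + A) :=
      (div_add_eq_div_add_iff (hm i) (hα i) hk hA).2 rfl
    have hsum_m : ∑ i, m i = k := by rw [← mul_sum]; exact div_mul_cancel₀ k hA.ne'
    simp only [hf m hm, hratio, ← sum_mul, sum_add_distrib, hsum_m]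
    ring
  have hs (i) (_ : i ∈ univ) : 0 < kv i + α i := add_pos (hkv i) (hα i)
  have hmem (i) (_ : i ∈ univ) : kv i / (kv i + α i) ∈ Set.Icc 0 1 :=
    ⟨(div_pos (hkv i) (hs i (mem_univ i))).le,
      div_le_one_of_le₀ (le_add_of_nonneg_right (hα i).le) (hs i (mem_univ i)).le⟩
  have hsum_s : ∑ i, (kv i + α i) = k + A := by rw [sum_add_distrib, hsum]
  have jensen := strictConcave_binEntropy.concaveOn.sum_mul_map_div_le hs hmem
  rw [hsum_s, hsum] at jensen
  refine ⟨by linarith [hf kv hkv], fun heq => funext fun i => ?_⟩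
  have hratio := strictConcave_binEntropy.div_eq_of_sum_mul_map_div_eq hs hmem
    (by rw [hsum_s, hsum]; linarith [hf kv hkv]) i (mem_univ i)
  rw [hsum_s, hsum] at hratio
  exact (div_add_eq_div_add_iff (hkv i) (hα i) hk hA).1 hratio
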